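/- Let T be a rooted ordered tree, let v be a node of T at depth d with root path o = v_0, v_1, …, v_d = v, and set η(v) := ∑_{j=0}^{d} ∏_{k=j}^{d-1} d(v_k)^{-1} (empty products equal 1). Let T' be the tree obtained from T by replacing the fringe subtree T_v by some rooted ordered tree T_v' with R(T_v') < R(T_v), leaving all other parts of T unchanged. Then, with F(T) := log(R(T) + 1), one has F(T) − F(T') ≥ (R(T_v) + η(v))^{-1}. -/

import Mathlib

open scoped ENNReal NNReal

/-- Rooted ordered (plane) trees: a tree is a root together with a linearly
ordered (finite) list of subtrees. -/
inductive PTree : Type where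
  | node : List PTree → PTree

namespace PTree

/-- The list of subtrees rooted at the children of the root. -/
def children : PTree → List PTree
  | node ts => ts

mutual
  /-- The number of nodes of a tree. -/
  def size : PTree → ℕ
    | node ts => 1 + sizeList ts
  def sizeList : List PTree → ℕ
    | [] => 0
    | t :: ts => size t + sizeList ts
end

/-- The subtree rooted at a given address (a path from the root, recorded as the
list of child indices), if it exists. -/
def subtreeAt : List ℕ → PTree → Option PTree
  | [], t => some t
  | i :: p, node ts => (ts[i]?).bind (subtreeAt p)

mutual
  /-- The list of addresses of all nodes of a tree. -/
  def nodesList : PTree → List (List ℕ)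
    | node ts => [] :: nodesListAux 0 ts
  def nodesListAux : ℕ → List PTree → List (List ℕ)
    | _, [] => []
    | i, t :: ts => (nodesList t).map (i :: ·) ++ nodesListAux (i + 1) ts
end

/-- The set of nodes of a tree, represented by their addresses. -/
def nodes (T : PTree) : Finset (List ℕ) := (nodesList T).toFinset

/-- The fringe subtree `T_v` rooted at the node with address `v`
(junk value if `v` is not a node of `T`). -/
def fringe (T : PTree) (v : List ℕ) : PTree := (subtreeAt v T).getD (node [])

/-- The out-degree (number of children) of the node at address `v`. -/
def degreeAt (T : PTree) (v : List ℕ) : ℕ := (fringe T v).children.length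

/-- `V` is the node set of a root subtree of `T`: a nonempty set of nodes containing
the root and closed under taking parents. -/
def IsRootSub (T : PTree) (V : Finset (List ℕ)) : Prop :=
  (V : Set (List ℕ)) ⊆ (nodes T : Set (List ℕ)) ∧ [] ∈ V ∧
    ∀ v ∈ V, v ≠ [] → v.dropLast ∈ V

/-- `V` is the node set of a (general) subtree of `T`: a nonempty set of nodes
inducing a connected subgraph, i.e. having a minimal node `r` such that `V` contains
every node on the path from `r` to any of its elements. -/
def IsSub (T : PTree) (V : Finset (List ℕ)) : Prop :=
  (V : Set (List ℕ)) ⊆ (nodes T : Set (List ℕ)) ∧ V.Nonempty ∧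
    ∃ r ∈ V, ∀ v ∈ V, r <+: v ∧ ∀ w : List ℕ, r <+: w → w <+: v → w ∈ V

/-- `R T` : the number of root subtrees of `T`. -/
noncomputable def R (T : PTree) : ℕ := {V : Finset (List ℕ) | IsRootSub T V}.ncard

/-- `S T` : the number of (general) subtrees of `T`. -/
noncomputable def S (T : PTree) : ℕ := {V : Finset (List ℕ) | IsSub T V}.ncard

/-- `π(u,v)`: the product of `d(w)⁻¹` over the nodes `w` on the path
from `u` to `v`, excluding `v` itself (`u` is assumed to be an ancestor of `v`). -/
noncomputable def pathProd (T : PTree) (u v : List ℕ) : ℝ :=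
  ∏ j ∈ Finset.Ico u.length v.length, ((degreeAt T (v.take j) : ℝ))⁻¹

/-- `η(v) = ∑_{u ⪯ v} π(u,v)`, the sum over all ancestors `u` of `v` (including `v`). -/
noncomputable def eta (T : PTree) (v : List ℕ) : ℝ :=
  ∑ j ∈ Finset.range (v.length + 1), pathProd T (v.take j) v

/-- `ζ(T) = ∑_{w ∈ T} π(o,w)` where `o` is the root. -/
noncomputable def zeta (T : PTree) : ℝ := ∑ v ∈ nodes T, pathProd T [] v

/-- The weight `w(T) = ∏_{v ∈ T} w_{d(v)}` of a tree, for a weight sequence `w`. -/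
noncomputable def weight (w : ℕ → ℝ) (T : PTree) : ℝ := ∏ v ∈ nodes T, w (degreeAt T v)

open Classical in
/-- `∑_{|T| = n} w(T) f(T)`, the sum over all rooted ordered trees of size `n`. -/
noncomputable def treeSum (w : ℕ → ℝ) (n : ℕ) (f : PTree → ℝ) : ℝ :=
  ∑' T : PTree, if size T = n then weight w T * f T else 0

/-- The partition function `Z_n = ∑_{|T| = n} w(T)`. -/
noncomputable def Z (w : ℕ → ℝ) (n : ℕ) : ℝ := treeSum w n fun _ => 1

/-- The expectation `E f(𝒯_n)` for the random tree `𝒯_n` of size `n` chosen with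
probability proportional to its weight. -/
noncomputable def expect (w : ℕ → ℝ) (n : ℕ) (f : PTree → ℝ) : ℝ := treeSum w n f / Z w n

open Classical in
/-- The probability `P(𝒯_n ∈ P)` for the random tree `𝒯_n` of size `n`. -/
noncomputable def prob (w : ℕ → ℝ) (n : ℕ) (P : PTree → Prop) : ℝ :=
  expect w n fun T => if P T then 1 else 0

/-- The variance `Var f(𝒯_n)`. -/
noncomputable def varOf (w : ℕ → ℝ) (n : ℕ) (f : PTree → ℝ) : ℝ :=
  expect w n (fun T => f T ^ 2) - (expect w n f) ^ 2

/-- The filter of admissible sizes `n → ∞`: those `n` for which trees of size `n`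
have positive total weight (i.e. `𝒯_n` is defined). -/
noncomputable def admissibleFilter (w : ℕ → ℝ) : Filter ℕ :=
  Filter.atTop ⊓ Filter.principal {n | 0 < Z w n}

/-- The number of root subtrees of `T` whose number of nodes satisfies `p`. -/
noncomputable def rootSubCount (T : PTree) (p : ℕ → Prop) : ℕ :=
  {V : Finset (List ℕ) | IsRootSub T V ∧ p V.card}.ncard

/-- `∑_{T' ⊆_r T} |T'|^r`, the sum of the `r`-th powers of the sizes of all
root subtrees of `T`. -/
noncomputable def rootSubSizePow (T : PTree) (r : ℕ) : ℝ :=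
  ∑' V : {V : Finset (List ℕ) // IsRootSub T V}, ((V.1.card : ℝ)) ^ r

/-- A full binary tree: every node has exactly 0 or 2 children. -/
def FullBinary (T : PTree) : Prop := ∀ v ∈ nodes T, degreeAt T v = 0 ∨ degreeAt T v = 2

/-- Replace the fringe subtree of `T` at address `v` by `T'`. -/
def replaceAt : List ℕ → PTree → PTree → PTree
  | [], _, t' => t'
  | i :: p, node ts, t' => node (ts.set i (replaceAt p (ts.getD i (node [])) t'))

end PTree

/-- The generator `Φ(x) = ∑_{i ≥ 0} w_i x^i`. -/
noncomputable def Phi (w : ℕ → ℝ) (x : ℝ) : ℝ := ∑' i : ℕ, w i * x ^ i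

/-- The derivative `Φ'(x) = ∑_{i ≥ 1} i w_i x^{i-1}` of the generator. -/
noncomputable def PhiD (w : ℕ → ℝ) (x : ℝ) : ℝ :=
  ∑' i : ℕ, ((i + 1 : ℕ) : ℝ) * w (i + 1) * x ^ i

/-- The second derivative `Φ''(x)` of the generator. -/
noncomputable def PhiDD (w : ℕ → ℝ) (x : ℝ) : ℝ :=
  ∑' i : ℕ, ((i + 2 : ℕ) : ℝ) * ((i + 1 : ℕ) : ℝ) * w (i + 2) * x ^ i

/-- The filter describing `z ↑ R` for `R ∈ (0,∞]` the radius of convergence: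
`z → R⁻` if `R < ∞`, and `z → ∞` if `R = ∞`. -/
noncomputable def leftLim (Rr : ℝ≥0∞) : Filter ℝ :=
  if Rr = ⊤ then Filter.atTop else nhdsWithin Rr.toReal (Set.Iio Rr.toReal)

/-- The cumulative distribution function of the centered normal distribution `N(0, v)`. -/
noncomputable def gaussCDF (v : ℝ≥0) (x : ℝ) : ℝ :=
  ((ProbabilityTheory.gaussianReal 0 v) (Set.Iic x)).toReal

/-- The weighted generating function `F_k(z) = ∑_T w(T) R(T)^k z^{|T|}`. -/
noncomputable def Fgen (w : ℕ → ℝ) (k : ℕ) (z : ℝ) : ℝ :=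
  ∑' T : PTree, PTree.weight w T * (PTree.R T : ℝ) ^ k * z ^ PTree.size T

/-- The mixed generating function `G_{m,ℓ}(z) = ∑_T w(T) S(T)^m R(T)^ℓ z^{|T|}`. -/
noncomputable def Ggen (w : ℕ → ℝ) (m ℓ : ℕ) (z : ℝ) : ℝ :=
  ∑' T : PTree, PTree.weight w T * (PTree.S T : ℝ) ^ m * (PTree.R T : ℝ) ^ ℓ * z ^ PTree.size T

/-- The radius of convergence `ρ_k` of `F_k`. -/
noncomputable def rhoGen (w : ℕ → ℝ) (k : ℕ) : ℝ :=
  sSup {x : ℝ | 0 ≤ x ∧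
    Summable fun T : PTree => PTree.weight w T * (PTree.R T : ℝ) ^ k * x ^ PTree.size T}

/-- `F̂_k(z) = ∑_{j=0}^k C(k,j) F_j(z)`. -/
noncomputable def Fhat (w : ℕ → ℝ) (k : ℕ) (z : ℝ) : ℝ :=
  ∑ j ∈ Finset.range (k + 1), (k.choose j : ℝ) * Fgen w j z


open Classical in
/-- The number of good nodes of `T`: nodes `v` whose fringe subtree has exactly
`3ℓ+1` nodes and with `η(v) ≤ A`. -/
noncomputable def PTree.goodCount (A : ℝ) (ℓ : ℕ) (T : PTree) : ℕ :=
  ((PTree.nodes T).filter fun v =>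
    PTree.size (PTree.fringe T v) = 3 * ℓ + 1 ∧ PTree.eta T v ≤ A).card

open Classical in
/-- `∑_{T full binary, |T| = n} R(T)^m`, the coefficient of `z^n` in `F_m(z)`
for full binary trees. -/
noncomputable def binRCoeff (m n : ℕ) : ℝ :=
  ∑' T : PTree, if PTree.size T = n ∧ PTree.FullBinary T then (PTree.R T : ℝ) ^ m else 0

/-- The formal power series `F_m(z) = ∑_n (∑_{T full binary, |T| = n} R(T)^m) z^n`. -/
noncomputable def binF (m : ℕ) : PowerSeries ℝ := PowerSeries.mk fun n => binRCoeff m n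

namespace PTree

attribute [local instance] Classical.propDecidable

lemma subtreeAt_cons' (i : ℕ) (p : List ℕ) (ts : List PTree) :
    subtreeAt (i :: p) (node ts) = (ts[i]?).bind (subtreeAt p) := rfl

lemma mem_nodesListAux : ∀ (ts : List PTree) (k : ℕ) (x : List ℕ),
    x ∈ nodesListAux k ts ↔
      ∃ j q, x = (k + j) :: q ∧ ∃ t, ts[j]? = some t ∧ q ∈ nodesList t := by
  intro ts
  induction ts with
  | nil => intro k x; simp [nodesListAux]
  | cons t ts ih =>
    intro k x
    simp only [nodesListAux, List.mem_append, List.mem_map, ih (k + 1)]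
    constructor
    · rintro (⟨q, hq, rfl⟩ | ⟨j, q, rfl, t', h, hq⟩)
      · exact ⟨0, q, by simp, t, by simp, hq⟩
      · refine ⟨j + 1, q, by rw [show k + (j + 1) = k + 1 + j by omega], t', by simpa using h, hq⟩
    · rintro ⟨j, q, rfl, t', h, hq⟩
      cases j with
      | zero =>
        left
        simp only [List.getElem?_cons_zero, Option.some.injEq] at h
        exact ⟨q, h ▸ hq, by simp⟩
      | succ j =>
        right
        exact ⟨j, q, by rw [show k + (j + 1) = k + 1 + j by omega], t', by simpa using h, hq⟩

lemma mem_nodesList_iff : ∀ (v : List ℕ) (T : PTree),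
    v ∈ nodesList T ↔ ∃ s, subtreeAt v T = some s := by
  intro v
  induction v with
  | nil =>
    intro T; obtain ⟨ts⟩ := T
    simp [nodesList, subtreeAt]
  | cons i p ih =>
    intro T; obtain ⟨ts⟩ := T
    rw [nodesList, List.mem_cons]
    simp only [mem_nodesListAux, subtreeAt_cons']
    constructor
    · rintro (h | ⟨j, q, hx, t, ht, hq⟩)
      · exact absurd h (List.cons_ne_nil _ _)
      · obtain ⟨rfl, rfl⟩ : j = i ∧ q = p := by
          simpa [eq_comm, And.comm] using hx
        rw [ht, Option.bind_some]
        exact (ih t).1 hq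
    · rintro ⟨s, hs⟩
      cases ht : ts[i]? with
      | none => rw [ht] at hs; simp at hs
      | some t =>
        rw [ht, Option.bind_some] at hs
        exact Or.inr ⟨i, p, by simp, t, ht, (ih t).2 ⟨s, hs⟩⟩

lemma mem_nodes_iff (T : PTree) (v : List ℕ) :
    v ∈ nodes T ↔ ∃ s, subtreeAt v T = some s := by
  rw [nodes, List.mem_toFinset]; exact mem_nodesList_iff v T

lemma nil_mem_nodes (T : PTree) : ([] : List ℕ) ∈ nodes T :=
  (mem_nodes_iff T []).2 ⟨T, rfl⟩

lemma isRootSub_finite (T : PTree) : {V : Finset (List ℕ) | IsRootSub T V}.Finite := by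
  refine ((nodes T).powerset.finite_toSet).subset ?_
  intro V hV
  simp only [Finset.mem_coe, Finset.mem_powerset]
  exact Finset.coe_subset.1 hV.1

lemma one_le_R (T : PTree) : 1 ≤ R T := by
  have h : IsRootSub T {[]} := by
    refine ⟨?_, by simp, ?_⟩
    · intro x hx
      simp only [Finset.coe_singleton, Set.mem_singleton_iff] at hx
      subst hx; exact nil_mem_nodes T
    · intro v hv hne
      simp only [Finset.mem_singleton] at hv
      exact absurd hv hne
  exact (Set.ncard_pos (isRootSub_finite T)).2 ⟨{[]}, h⟩

/-- The set of tails of elements of `V` whose head is `i`. -/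
def childSet (i : ℕ) (V : Finset (List ℕ)) : Finset (List ℕ) :=
  (V.filter (fun l => l.head? = some i)).image List.tail

lemma mem_childSet {i : ℕ} {V : Finset (List ℕ)} {q : List ℕ} :
    q ∈ childSet i V ↔ i :: q ∈ V := by
  simp only [childSet, Finset.mem_image, Finset.mem_filter]
  constructor
  · rintro ⟨l, ⟨hl, hh⟩, rfl⟩
    cases l with
    | nil => simp at hh
    | cons a l =>
      simp only [List.head?_cons, Option.some.injEq] at hh
      subst hh; exact hl
  · intro h; exact ⟨i :: q, ⟨h, rfl⟩, rfl⟩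

end PTree
namespace PTree

/-- Root subtrees of `node ts` avoiding child `i` entirely. -/
def S0 (ts : List PTree) (i : ℕ) : Set (Finset (List ℕ)) :=
  {V | IsRootSub (node ts) V ∧ childSet i V = ∅}

/-- Root subtrees of `node ts` meeting child `i`. -/
def S1 (ts : List PTree) (i : ℕ) : Set (Finset (List ℕ)) :=
  {V | IsRootSub (node ts) V ∧ childSet i V ≠ ∅}

lemma S0_finite (ts : List PTree) (i : ℕ) : (S0 ts i).Finite :=
  (isRootSub_finite (node ts)).subset (fun _ h => h.1)

lemma S1_finite (ts : List PTree) (i : ℕ) : (S1 ts i).Finite :=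
  (isRootSub_finite (node ts)).subset (fun _ h => h.1)

lemma R_split (ts : List PTree) (i : ℕ) :
    R (node ts) = (S0 ts i).ncard + (S1 ts i).ncard := by
  have h : {V : Finset (List ℕ) | IsRootSub (node ts) V} = S0 ts i ∪ S1 ts i := by
    ext V
    simp only [Set.mem_setOf_eq, S0, S1, Set.mem_union, Set.mem_setOf_eq]
    tauto
  rw [R, h, Set.ncard_union_eq ?_ (S0_finite ts i) (S1_finite ts i)]
  rw [Set.disjoint_left]
  rintro V ⟨_, h0⟩ ⟨_, h1⟩
  exact h1 h0

lemma ncard_prod {α β : Type*} {s : Set α} {t : Set β} (hs : s.Finite) (ht : t.Finite) :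
    (s ×ˢ t).ncard = s.ncard * t.ncard := by
  rw [Set.ncard_eq_toFinset_card _ (hs.prod ht), Set.ncard_eq_toFinset_card _ hs,
    Set.ncard_eq_toFinset_card _ ht, ← Finset.card_product]
  congr 1
  ext x
  simp [Set.Finite.mem_toFinset, Finset.mem_product]

lemma path_mem_of_cons_mem {V : Finset (List ℕ)} (hV : IsRootSub (node ts) V)
    {i : ℕ} : ∀ (n : ℕ) (q : List ℕ), q.length ≤ n → i :: q ∈ V → [i] ∈ V := by
  intro n
  induction n with
  | zero =>
    intro q hq h
    have : q = [] := List.eq_nil_of_length_eq_zero (Nat.le_zero.1 hq)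
    simpa [this] using h
  | succ n ihn =>
    intro q hq h
    by_cases hq0 : q = []
    · simpa [hq0] using h
    · have hd := hV.2.2 (i :: q) h (List.cons_ne_nil _ _)
      rw [List.dropLast_cons_of_ne_nil hq0] at hd
      exact ihn q.dropLast (by rw [List.length_dropLast]; omega) hd

lemma bijOn_S1 {ts : List PTree} {i : ℕ} {t_i : PTree} (hti : ts[i]? = some t_i) :
    Set.BijOn (fun p : Finset (List ℕ) × Finset (List ℕ) => p.1 ∪ p.2.image (i :: ·))
      (S0 ts i ×ˢ {V | IsRootSub t_i V}) (S1 ts i) := by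
  constructor
  · -- MapsTo
    rintro ⟨V, U⟩ ⟨⟨hV, hV0⟩, hU⟩
    refine ⟨⟨?_, ?_, ?_⟩, ?_⟩
    · intro x hx
      simp only [Finset.coe_union, Set.mem_union, Finset.mem_coe, Finset.mem_image] at hx
      rcases hx with hx | ⟨q, hq, rfl⟩
      · exact hV.1 hx
      · obtain ⟨s, hs⟩ := (mem_nodes_iff t_i q).1 (hU.1 hq)
        exact (mem_nodes_iff _ _).2 ⟨s, by rw [subtreeAt_cons', hti, Option.bind_some, hs]⟩
    · exact Finset.mem_union_left _ hV.2.1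
    · intro x hx hne
      rcases Finset.mem_union.1 hx with hx | hx
      · exact Finset.mem_union_left _ (hV.2.2 x hx hne)
      · obtain ⟨q, hq, rfl⟩ := Finset.mem_image.1 hx
        by_cases hq0 : q = []
        · subst hq0
          exact Finset.mem_union_left _ hV.2.1
        · rw [List.dropLast_cons_of_ne_nil hq0]
          exact Finset.mem_union_right _
            (Finset.mem_image.2 ⟨q.dropLast, hU.2.2 q hq hq0, rfl⟩)
    · intro h
      have : ([] : List ℕ) ∈ childSet i (V ∪ U.image (i :: ·)) :=
        mem_childSet.2 (Finset.mem_union_right _ (Finset.mem_image.2 ⟨[], hU.2.1, rfl⟩))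
      rw [h] at this
      simp at this
  · constructor
    · -- InjOn
      rintro ⟨V, U⟩ ⟨⟨hV, hV0⟩, hU⟩ ⟨V', U'⟩ ⟨⟨hV', hV0'⟩, hU'⟩ heq
      simp only at heq
      have hmem : ∀ (W : Finset (List ℕ)) (W0 : Finset (List ℕ)),
          childSet i W = ∅ → ∀ x, x ∈ W ∪ W0.image (i :: ·) ↔
            (x ∈ W ∨ ∃ q ∈ W0, x = i :: q) := by
        intro W W0 _ x
        simp only [Finset.mem_union, Finset.mem_image]
        constructor
        · rintro (h | ⟨q, hq, rfl⟩)
          · exact Or.inl h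
          · exact Or.inr ⟨q, hq, rfl⟩
        · rintro (h | ⟨q, hq, rfl⟩)
          · exact Or.inl h
          · exact Or.inr ⟨q, hq, rfl⟩
      have hVV : V = V' := by
        ext x
        constructor
        · intro hx
          have : x ∈ V' ∪ U'.image (i :: ·) := heq ▸ Finset.mem_union_left _ hx
          rcases Finset.mem_union.1 this with h | h
          · exact h
          · obtain ⟨q, _, rfl⟩ := Finset.mem_image.1 h
            have : q ∈ childSet i V := mem_childSet.2 hx
            rw [hV0] at this; simp at this
        · intro hx
          have : x ∈ V ∪ U.image (i :: ·) := heq ▸ Finset.mem_union_left _ hx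
          rcases Finset.mem_union.1 this with h | h
          · exact h
          · obtain ⟨q, _, rfl⟩ := Finset.mem_image.1 h
            have : q ∈ childSet i V' := mem_childSet.2 hx
            rw [hV0'] at this; simp at this
      have hUU : U = U' := by
        ext q
        have key : ∀ (W W0 : Finset (List ℕ)), childSet i W = ∅ →
            (i :: q ∈ W ∪ W0.image (i :: ·) ↔ q ∈ W0) := by
          intro W W0 hW0
          rw [Finset.mem_union]
          constructor
          · rintro (h | h)
            · have : q ∈ childSet i W := mem_childSet.2 h
              rw [hW0] at this; simp at this
            · obtain ⟨q', hq', he⟩ := Finset.mem_image.1 h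
              obtain rfl : q' = q := by simpa using he
              exact hq'
          · intro h
            exact Or.inr (Finset.mem_image.2 ⟨q, h, rfl⟩)
        rw [← key V U hV0, heq, key V' U' hV0']
      rw [Prod.ext_iff]; exact ⟨hVV, hUU⟩
    · -- SurjOn
      rintro V₁ ⟨hV₁, hne⟩
      refine ⟨(V₁.filter (fun l => l.head? ≠ some i), childSet i V₁),
        ⟨⟨⟨?_, ?_, ?_⟩, ?_⟩, ⟨?_, ?_, ?_⟩⟩, ?_⟩
      · intro x hx
        simp only [Finset.coe_filter, Set.mem_setOf_eq] at hx
        exact hV₁.1 hx.1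
      · exact Finset.mem_filter.2 ⟨hV₁.2.1, by simp⟩
      · intro x hx hne'
        obtain ⟨hx1, hx2⟩ := Finset.mem_filter.1 hx
        refine Finset.mem_filter.2 ⟨hV₁.2.2 x hx1 hne', ?_⟩
        cases x with
        | nil => exact absurd rfl hne'
        | cons a l =>
          simp only [List.head?_cons, ne_eq, Option.some.injEq] at hx2
          by_cases hl : l = []
          · subst hl; simp
          · rw [List.dropLast_cons_of_ne_nil hl]
            simp only [List.head?_cons, ne_eq, Option.some.injEq]
            exact hx2
      · rw [Finset.eq_empty_iff_forall_notMem]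
        intro q hq
        have := Finset.mem_filter.1 (mem_childSet.1 hq)
        simp at this
      · intro q hq
        obtain ⟨s, hs⟩ := (mem_nodes_iff _ _).1 (hV₁.1 (Finset.mem_coe.2 (mem_childSet.1 hq)))
        rw [subtreeAt_cons', hti, Option.bind_some] at hs
        exact (mem_nodes_iff _ _).2 ⟨s, hs⟩
      · obtain ⟨q, hq⟩ := Finset.nonempty_iff_ne_empty.2 hne
        exact mem_childSet.2
          (path_mem_of_cons_mem hV₁ q.length q le_rfl (mem_childSet.1 hq))
      · intro q hq hq0
        have h1 := hV₁.2.2 (i :: q) (mem_childSet.1 hq) (List.cons_ne_nil _ _)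
        rw [List.dropLast_cons_of_ne_nil hq0] at h1
        exact mem_childSet.2 h1
      · simp only
        ext x
        simp only [Finset.mem_union, Finset.mem_filter, Finset.mem_image]
        constructor
        · rintro (⟨h, _⟩ | ⟨q, hq, rfl⟩)
          · exact h
          · exact mem_childSet.1 hq
        · intro hx
          cases x with
          | nil => exact Or.inl ⟨hx, by simp⟩
          | cons a l =>
            by_cases ha : a = i
            · subst ha
              exact Or.inr ⟨l, mem_childSet.2 hx, rfl⟩
            · exact Or.inl ⟨hx, by simpa using ha⟩

end PTree
namespace PTree

lemma S0_congr {ts ts' : List PTree} {i : ℕ} (h : ∀ j, j ≠ i → ts[j]? = ts'[j]?) :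
    S0 ts i = S0 ts' i := by
  have main : ∀ (a b : List PTree), (∀ j, j ≠ i → a[j]? = b[j]?) →
      ∀ V : Finset (List ℕ), IsRootSub (node a) V → childSet i V = ∅ →
        IsRootSub (node b) V := by
    intro a b hab V hV h0
    refine ⟨?_, hV.2.1, hV.2.2⟩
    intro x hx
    have hx' : x ∈ nodes (node a) := Finset.mem_coe.1 (hV.1 hx)
    rw [Finset.mem_coe] at hx ⊢
    rw [mem_nodes_iff] at hx' ⊢
    cases x with
    | nil => exact ⟨node b, rfl⟩
    | cons j q =>
      have hji : j ≠ i := by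
        rintro rfl
        have : q ∈ childSet j V := mem_childSet.2 hx
        rw [h0] at this; simp at this
      rw [subtreeAt_cons'] at hx' ⊢
      rw [← hab j hji]
      exact hx'
  ext V
  exact ⟨fun hV => ⟨main ts ts' h V hV.1 hV.2, hV.2⟩,
    fun hV => ⟨main ts' ts (fun j hj => (h j hj).symm) V hV.1 hV.2, hV.2⟩⟩

lemma R_node {ts : List PTree} {i : ℕ} {t_i : PTree} (hti : ts[i]? = some t_i) :
    (∀ t' : PTree, R (node (ts.set i t')) = (S0 ts i).ncard * (R t' + 1)) ∧
      ts.length ≤ (S0 ts i).ncard := by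
  have hi : i < ts.length := (List.getElem?_eq_some_iff.1 hti).1
  constructor
  · intro t'
    have hu : (ts.set i t')[i]? = some t' := List.getElem?_set_self (by simpa using hi)
    have hS0 : S0 (ts.set i t') i = S0 ts i :=
      S0_congr (fun j hj => List.getElem?_set_ne (fun hij => hj hij.symm))
    have hb := bijOn_S1 hu
    have h1 : (S1 (ts.set i t') i).ncard =
        (S0 (ts.set i t') i ×ˢ {V | IsRootSub t' V}).ncard := by
      rw [← hb.image_eq, Set.ncard_image_of_injOn hb.injOn]
    rw [R_split (ts.set i t') i, h1,
      ncard_prod (S0_finite _ _) (isRootSub_finite t'), hS0, R]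
    ring
  · set P : Finset (Finset ℕ) := ((Finset.range ts.length).erase i).powerset with hP
    set ι : Finset ℕ → Finset (List ℕ) := fun s => insert [] (s.image fun j => [j]) with hι
    have hmem : ∀ s ∈ (P : Set (Finset ℕ)), ι s ∈ S0 ts i := by
      intro s hs
      rw [Finset.mem_coe, Finset.mem_powerset] at hs
      have hjs : ∀ j ∈ s, j ≠ i ∧ j < ts.length := by
        intro j hj
        have := hs hj
        rw [Finset.mem_erase, Finset.mem_range] at this
        exact this
      refine ⟨⟨?_, Finset.mem_insert_self _ _, ?_⟩, ?_⟩
      · intro x hx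
        rw [Finset.mem_coe, Finset.mem_insert] at hx
        rcases hx with rfl | hx
        · exact Finset.mem_coe.2 (nil_mem_nodes _)
        · obtain ⟨j, hj, rfl⟩ := Finset.mem_image.1 hx
          refine Finset.mem_coe.2 ((mem_nodes_iff _ _).2 ⟨ts[j]'((hjs j hj).2), ?_⟩)
          rw [subtreeAt_cons', List.getElem?_eq_getElem (hjs j hj).2, Option.bind_some]
          rfl
      · intro x hx hne
        rcases Finset.mem_insert.1 hx with rfl | hx
        · exact absurd rfl hne
        · obtain ⟨j, hj, rfl⟩ := Finset.mem_image.1 hx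
          exact Finset.mem_insert_self _ _
      · rw [Finset.eq_empty_iff_forall_notMem]
        intro q hq
        rcases Finset.mem_insert.1 (mem_childSet.1 hq) with h | h
        · exact List.cons_ne_nil _ _ h
        · obtain ⟨j, hj, hje⟩ := Finset.mem_image.1 h
          injection hje with h1 h2
          exact (hjs j hj).1 h1
    have hinj : Set.InjOn ι P := by
      intro s _ s' _ he
      ext j
      have hmm : ∀ u : Finset ℕ, j ∈ u ↔ [j] ∈ ι u := by
        intro u
        simp only [hι, Finset.mem_insert, Finset.mem_image]
        constructor
        · intro h; exact Or.inr ⟨j, h, rfl⟩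
        · rintro (h | ⟨j', hj', he'⟩)
          · exact absurd h (by simp)
          · obtain rfl : j' = j := by simpa using he'
            exact hj'
      rw [hmm s, he, ← hmm s']
    have hsub : ι '' (P : Set (Finset ℕ)) ⊆ S0 ts i := by
      rintro _ ⟨s, hs, rfl⟩; exact hmem s hs
    have hcard : (P.card : ℕ) ≤ (S0 ts i).ncard := by
      calc P.card = ((P : Set (Finset ℕ))).ncard := (Set.ncard_coe_finset P).symm
        _ = (ι '' (P : Set (Finset ℕ))).ncard := (Set.ncard_image_of_injOn hinj).symm
        _ ≤ (S0 ts i).ncard := Set.ncard_le_ncard hsub (S0_finite ts i)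
    have hPcard : P.card = 2 ^ (ts.length - 1) := by
      rw [hP, Finset.card_powerset, Finset.card_erase_of_mem (Finset.mem_range.2 hi),
        Finset.card_range]
    have h2 : ts.length - 1 < 2 ^ (ts.length - 1) := Nat.lt_two_pow_self
    rw [hPcard] at hcard
    generalize hk : 2 ^ (ts.length - 1) = k at hcard h2
    omega

end PTree
namespace PTree

lemma fringe_cons {ts : List PTree} {i : ℕ} {t_i : PTree} (h : ts[i]? = some t_i)
    (p : List ℕ) : fringe (node ts) (i :: p) = fringe t_i p := by
  rw [fringe, fringe, subtreeAt_cons', h, Option.bind_some]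

lemma degreeAt_nil (ts : List PTree) : degreeAt (node ts) [] = ts.length := rfl

lemma degreeAt_cons {ts : List PTree} {i : ℕ} {t_i : PTree} (h : ts[i]? = some t_i)
    (q : List ℕ) : degreeAt (node ts) (i :: q) = degreeAt t_i q := by
  rw [degreeAt, degreeAt, fringe_cons h]

lemma pathProd_nonneg (T : PTree) (u v : List ℕ) : 0 ≤ pathProd T u v :=
  Finset.prod_nonneg fun _ _ => inv_nonneg.2 (Nat.cast_nonneg _)

lemma eta_nonneg (T : PTree) (v : List ℕ) : 0 ≤ eta T v :=
  Finset.sum_nonneg fun _ _ => pathProd_nonneg _ _ _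

lemma pathProd_cons {ts : List PTree} {i : ℕ} {t_i : PTree} (h : ts[i]? = some t_i)
    (u p : List ℕ) : pathProd (node ts) (i :: u) (i :: p) = pathProd t_i u p := by
  rw [pathProd, pathProd, Finset.prod_Ico_eq_prod_range, Finset.prod_Ico_eq_prod_range]
  simp only [List.length_cons, Nat.succ_sub_succ]
  apply Finset.prod_congr rfl
  intro k _
  rw [show u.length + 1 + k = (u.length + k) + 1 by omega, List.take_succ_cons,
    degreeAt_cons h]

lemma pathProd_nil_cons {ts : List PTree} {i : ℕ} {t_i : PTree} (h : ts[i]? = some t_i)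
    (p : List ℕ) :
    pathProd (node ts) [] (i :: p) = (ts.length : ℝ)⁻¹ * pathProd t_i [] p := by
  rw [pathProd]
  have h0 : Finset.Ico (List.length ([] : List ℕ)) (List.length (i :: p)) =
      Finset.range (p.length + 1) := by
    rw [List.length_nil, List.length_cons, Finset.range_eq_Ico]
  rw [h0, Finset.prod_range_succ', List.take_zero, degreeAt_nil]
  have h2 : (∏ k ∈ Finset.range p.length,
      ((degreeAt (node ts) (List.take (k + 1) (i :: p)) : ℝ))⁻¹) = pathProd t_i [] p := by
    rw [pathProd]
    have h1 : Finset.Ico (List.length ([] : List ℕ)) p.length = Finset.range p.length := by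
      rw [List.length_nil, Finset.range_eq_Ico]
    rw [h1]
    apply Finset.prod_congr rfl
    intro k _
    rw [List.take_succ_cons, degreeAt_cons h]
  rw [h2]
  ring

lemma eta_cons {ts : List PTree} {i : ℕ} {t_i : PTree} (h : ts[i]? = some t_i)
    (p : List ℕ) :
    eta (node ts) (i :: p) = (ts.length : ℝ)⁻¹ * pathProd t_i [] p + eta t_i p := by
  rw [eta, eta]
  simp only [List.length_cons]
  rw [Finset.sum_range_succ', add_comm]
  congr 1
  · rw [List.take_zero]
    exact pathProd_nil_cons h p
  · apply Finset.sum_congr rfl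
    intro j _
    rw [List.take_succ_cons, pathProd_cons h]

lemma replaceAt_cons {ts : List PTree} {i : ℕ} {t_i : PTree} (h : ts[i]? = some t_i)
    (p : List ℕ) (t' : PTree) :
    replaceAt (i :: p) (node ts) t' = node (ts.set i (replaceAt p t_i t')) := by
  rw [replaceAt]
  congr 2
  rw [List.getD_eq_getElem?_getD, h, Option.getD_some]

lemma set_self {ts : List PTree} {i : ℕ} {t_i : PTree} (h : ts[i]? = some t_i) :
    ts.set i t_i = ts := by
  apply List.ext_getElem?
  intro n
  rcases eq_or_ne i n with rfl | hne
  · rw [List.getElem?_set_self (List.getElem?_eq_some_iff.1 h).1, h]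
  · rw [List.getElem?_set_ne hne]

lemma key : ∀ (v : List ℕ) (T : PTree), (∃ s, subtreeAt v T = some s) → ∀ Tv' : PTree,
    ∃ A B : ℕ, 1 ≤ B ∧
      R T = A + B * R (fringe T v) ∧
      R (replaceAt v T Tv') = A + B * R Tv' ∧
      ((A : ℝ) + 1) ≤ (B : ℝ) * eta T v ∧
      (1 : ℝ) ≤ (B : ℝ) * pathProd T [] v := by
  intro v
  induction v with
  | nil =>
    intro T _ Tv'
    refine ⟨0, 1, le_refl _, by simp [fringe, subtreeAt], by simp [replaceAt], ?_, ?_⟩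
    · simp [eta, pathProd]
    · simp [pathProd]
  | cons i p ih =>
    intro T hT Tv'
    obtain ⟨ts⟩ := T
    obtain ⟨s, hs⟩ := hT
    rw [subtreeAt_cons'] at hs
    obtain ⟨t_i, hti, hp⟩ : ∃ t_i, ts[i]? = some t_i ∧ subtreeAt p t_i = some s := by
      cases h' : ts[i]? with
      | none => rw [h'] at hs; simp at hs
      | some t => rw [h', Option.bind_some] at hs; exact ⟨t, rfl, hs⟩
    obtain ⟨A', B', hB', h1', h2', h4', h5'⟩ := ih t_i ⟨s, hp⟩ Tv'
    obtain ⟨hRset, hβm⟩ := R_node hti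
    set β := (S0 ts i).ncard with hβ
    have hm1 : 1 ≤ ts.length := Nat.one_le_of_lt (List.getElem?_eq_some_iff.1 hti).1
      |>.trans le_rfl
    have hβ1 : 1 ≤ β := le_trans hm1 hβm
    have hRnode : R (node ts) = β * (R t_i + 1) := by
      have := hRset t_i
      rwa [set_self hti] at this
    refine ⟨β * (A' + 1), β * B', Nat.one_le_iff_ne_zero.2 (by positivity), ?_, ?_, ?_, ?_⟩
    · rw [hRnode, fringe_cons hti, h1']
      ring
    · rw [replaceAt_cons hti, hRset, h2']
      ring
    · -- (β(A'+1) : ℝ) + 1 ≤ βB' * eta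
      rw [eta_cons hti]
      push_cast
      have hmR : (1 : ℝ) ≤ (ts.length : ℝ) := by exact_mod_cast hm1
      have hβR : (ts.length : ℝ) ≤ (β : ℝ) := by exact_mod_cast hβm
      have hπ : (0 : ℝ) ≤ pathProd t_i [] p := pathProd_nonneg _ _ _
      have hη : (0 : ℝ) ≤ eta t_i p := eta_nonneg _ _
      have hmpos : (0 : ℝ) < (ts.length : ℝ) := lt_of_lt_of_le one_pos hmR
      have key1 : (1 : ℝ) ≤ (β : ℝ) * (B' : ℝ) * ((ts.length : ℝ)⁻¹ * pathProd t_i [] p) := by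
        have e1 : (ts.length : ℝ) ≤ (β : ℝ) * ((B' : ℝ) * pathProd t_i [] p) := by
          calc (ts.length : ℝ) ≤ (β : ℝ) := hβR
            _ = (β : ℝ) * 1 := by ring
            _ ≤ (β : ℝ) * ((B' : ℝ) * pathProd t_i [] p) := by
                apply mul_le_mul_of_nonneg_left h5' (by positivity)
        have e2 := mul_le_mul_of_nonneg_left e1 (le_of_lt (inv_pos.2 hmpos))
        rw [inv_mul_cancel₀ (ne_of_gt hmpos)] at e2
        calc (1 : ℝ) ≤ (ts.length : ℝ)⁻¹ * ((β : ℝ) * ((B' : ℝ) * pathProd t_i [] p)) := e2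
          _ = (β : ℝ) * (B' : ℝ) * ((ts.length : ℝ)⁻¹ * pathProd t_i [] p) := by ring
      have key2 : (β : ℝ) * ((A' : ℝ) + 1) ≤ (β : ℝ) * (B' : ℝ) * eta t_i p := by
        calc (β : ℝ) * ((A' : ℝ) + 1) ≤ (β : ℝ) * ((B' : ℝ) * eta t_i p) :=
              mul_le_mul_of_nonneg_left h4' (by positivity)
          _ = (β : ℝ) * (B' : ℝ) * eta t_i p := by ring
      nlinarith [key1, key2]
    · rw [pathProd_nil_cons hti]
      push_cast
      have hβR : (ts.length : ℝ) ≤ (β : ℝ) := by exact_mod_cast hβm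
      have hπ : (0 : ℝ) ≤ pathProd t_i [] p := pathProd_nonneg _ _ _
      have hmpos : (0 : ℝ) < (ts.length : ℝ) := by exact_mod_cast hm1
      have e1 : (ts.length : ℝ) ≤ (β : ℝ) * ((B' : ℝ) * pathProd t_i [] p) := by
        calc (ts.length : ℝ) ≤ (β : ℝ) := hβR
          _ = (β : ℝ) * 1 := by ring
          _ ≤ (β : ℝ) * ((B' : ℝ) * pathProd t_i [] p) := by
              apply mul_le_mul_of_nonneg_left h5' (by positivity)
      have e2 := mul_le_mul_of_nonneg_left e1 (le_of_lt (inv_pos.2 hmpos))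
      rw [inv_mul_cancel₀ (ne_of_gt hmpos)] at e2
      calc (1 : ℝ) ≤ (ts.length : ℝ)⁻¹ * ((β : ℝ) * ((B' : ℝ) * pathProd t_i [] p)) := e2
        _ = (β : ℝ) * (B' : ℝ) * ((ts.length : ℝ)⁻¹ * pathProd t_i [] p) := by ring

end PTree

open PTree in
/-- If `T'` is obtained from `T` by replacing the fringe subtree at a
node `v` by a tree with strictly fewer root subtrees, then, with `F(T) = log(R(T)+1)`,
`F(T) − F(T') ≥ (R(T_v) + η(v))⁻¹`. -/
theorem log_rootSubtree_count_decrease (T : PTree) (v : List ℕ) (hv : v ∈ nodes T)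
    (Tv' : PTree) (hR : R Tv' < R (fringe T v)) :
    ((R (fringe T v) : ℝ) + eta T v)⁻¹ ≤
      Real.log ((R T : ℝ) + 1) - Real.log ((R (replaceAt v T Tv') : ℝ) + 1) := by
  obtain ⟨s, hs⟩ := (mem_nodes_iff T v).1 hv
  obtain ⟨A, B, hB, h1, h2, h4, h5⟩ := key v T ⟨s, hs⟩ Tv'
  have hη0 : 0 ≤ eta T v := eta_nonneg T v
  set Rv := R (fringe T v) with hRvdef
  set Rw := R Tv' with hRwdef
  have hRv1 : 1 ≤ Rv := by omega
  have hBR : (1 : ℝ) ≤ (B : ℝ) := by exact_mod_cast hB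
  have hx : ((R T : ℝ) + 1) = (A : ℝ) + (B : ℝ) * (Rv : ℝ) + 1 := by
    rw [h1]; push_cast; ring
  have hy : ((R (replaceAt v T Tv') : ℝ) + 1) = (A : ℝ) + (B : ℝ) * (Rw : ℝ) + 1 := by
    rw [h2]; push_cast; ring
  set x : ℝ := (A : ℝ) + (B : ℝ) * (Rv : ℝ) + 1 with hxd
  set y : ℝ := (A : ℝ) + (B : ℝ) * (Rw : ℝ) + 1 with hyd
  have hy0 : (0 : ℝ) < y := by positivity
  have hx0 : (0 : ℝ) < x := by positivity
  have hRwRv : (Rw : ℝ) + 1 ≤ (Rv : ℝ) := by exact_mod_cast hR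
  have hxy : y + (B : ℝ) ≤ x := by
    rw [hxd, hyd]
    nlinarith
  rw [hx, hy]
  have hlog := Real.log_le_sub_one_of_pos (div_pos hy0 hx0)
  rw [Real.log_div (ne_of_gt hy0) (ne_of_gt hx0)] at hlog
  have hden : (0 : ℝ) < (Rv : ℝ) + eta T v := by
    have h1' : (1 : ℝ) ≤ (Rv : ℝ) := by exact_mod_cast hRv1
    linarith
  have hstep : ((Rv : ℝ) + eta T v)⁻¹ ≤ 1 - y / x := by
    have h1yx : 1 - y / x = (x - y) / x := by field_simp
    rw [h1yx, inv_eq_one_div, div_le_div_iff₀ hden hx0]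
    have hBx : (B : ℝ) ≤ x - y := by linarith
    have e1 : x ≤ (B : ℝ) * ((Rv : ℝ) + eta T v) := by
      have hexp : (B : ℝ) * ((Rv : ℝ) + eta T v) =
          (B : ℝ) * (Rv : ℝ) + (B : ℝ) * eta T v := by ring
      rw [hexp, hxd]
      linarith
    have e2 : (B : ℝ) * ((Rv : ℝ) + eta T v) ≤ (x - y) * ((Rv : ℝ) + eta T v) :=
      mul_le_mul_of_nonneg_right hBx hden.le
    linarith
  linarith
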